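/- arXiv:2011.09925 — 7 statements merged into one kernel-verified Lean document; each statement's English description precedes it below -/
import Mathlib

section
/- Let q, p, v, vᵢ, vᵢ₊₁ ∈ ℝ² be such that vᵢ − q and vᵢ₊₁ − q are linearly independent and v lies in the cone at q spanned by vᵢ and vᵢ₊₁. Let T := convexHull ℝ {v, vᵢ, vᵢ₊₁}, and assume q ∉ T and p ∉ T. If openSegment ℝ q p meets T, then openSegment ℝ q p meets the closed segment [vᵢ, vᵢ₊₁]. (This is the geometric fact underlying the cases of Sections 3.1 and 3.2 of the paper in which the maximal cone vc_m is bounded by the rays q vᵢ and q vᵢ₊₁: any line of sight from q through the triangle v vᵢ vᵢ₊₁ must cross the segment vᵢ vᵢ₊₁.) -/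
open Set

/-- Points of the plane. -/
abbrev Pt := EuclideanSpace ℝ (Fin 2)

/-- `x` is an endpoint of the (nondegenerate) closed segment `s`. -/
def IsSegEndpoint (x : Pt) (s : Set Pt) : Prop :=
  ∃ a b : Pt, a ≠ b ∧ s = segment ℝ a b ∧ (x = a ∨ x = b)

/-- An obstacle set: a finite set of nondegenerate closed segments such that any two
distinct segments intersect at most in a point that is a common endpoint of both. -/
def IsObstacleSet (E : Set (Set Pt)) : Prop :=
  E.Finite ∧
  (∀ s ∈ E, ∃ a b : Pt, a ≠ b ∧ s = segment ℝ a b) ∧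
  (∀ s ∈ E, ∀ t ∈ E, s ≠ t → ∀ x ∈ s ∩ t, IsSegEndpoint x s ∧ IsSegEndpoint x t)

/-- `V(E)`: the set of all endpoints of segments of `E`. -/
def Vset (E : Set (Set Pt)) : Set Pt := {x | ∃ s ∈ E, IsSegEndpoint x s}

/-- Two points `p ≠ q` are mutually visible with respect to `E` if the open segment
joining them is disjoint from every segment of `E`. -/
def MutuallyVisible (E : Set (Set Pt)) (p q : Pt) : Prop :=
  p ≠ q ∧ ∀ s ∈ E, openSegment ℝ p q ∩ s = ∅

/-- The cone at `q` spanned by `a` and `b`. -/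
def Cone (q a b : Pt) : Set Pt :=
  {x | ∃ s t : ℝ, 0 ≤ s ∧ 0 ≤ t ∧ x = q + s • (a - q) + t • (b - q)}

open AffineMap

section LineMap

variable {E : Type*} [AddCommGroup E] [Module ℝ E]

theorem lineMap_mem_segment_lineMap (x y : E) {β κ μ : ℝ} (h₁ : β ≤ κ) (h₂ : κ ≤ μ) :
    lineMap x y κ ∈ segment ℝ (lineMap x y β) (lineMap x y μ) := by
  rw [← image_segment, segment_eq_Icc (h₁.trans h₂)]
  exact mem_image_of_mem _ ⟨h₁, h₂⟩

theorem eq_lineMap_div_of_lineMap_eq {q p w : E} {β κ : ℝ} (hκ : κ ≠ 0)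
    (h : lineMap q p β = lineMap q w κ) : w = lineMap q p (β / κ) := by
  rw [lineMap_apply_module', lineMap_apply_module'] at h
  have hw : κ • (w - q) = β • (p - q) := (add_right_cancel h).symm
  rw [lineMap_apply_module', div_eq_inv_mul, mul_smul, ← hw, smul_smul, inv_mul_cancel₀ hκ,
    one_smul, sub_add_cancel]

end LineMap

theorem convex_cone (q a b : Pt) : Convex ℝ (Cone q a b) := by
  rintro _ ⟨s₁, t₁, hs₁, ht₁, rfl⟩ _ ⟨s₂, t₂, hs₂, ht₂, rfl⟩ α β hα hβ hαβ
  refine ⟨α * s₁ + β * s₂, α * t₁ + β * t₂, by positivity, by positivity, ?_⟩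
  match_scalars
  · linear_combination hαβ
  · ring
  · ring

theorem convexHull_subset_cone {q v a b : Pt} (hv : v ∈ Cone q a b) :
    convexHull ℝ {v, a, b} ⊆ Cone q a b := by
  refine convexHull_min ?_ (convex_cone q a b)
  rintro x (rfl | rfl | rfl)
  · exact hv
  · exact ⟨1, 0, zero_le_one, le_rfl, by module⟩
  · exact ⟨0, 1, le_rfl, zero_le_one, by module⟩

theorem exists_mem_segment_eq_lineMap_of_mem_cone {q a b x : Pt} (hx : x ∈ Cone q a b) :
    ∃ w ∈ segment ℝ a b, ∃ κ : ℝ, 0 ≤ κ ∧ x = lineMap q w κ := by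
  obtain ⟨s, t, hs, ht, rfl⟩ := hx
  rcases (add_nonneg hs ht).eq_or_lt with hst | hst
  · obtain ⟨rfl, rfl⟩ : s = 0 ∧ t = 0 := ⟨by linarith, by linarith⟩
    exact ⟨a, left_mem_segment ℝ a b, 0, le_rfl, by simp⟩
  refine ⟨(s / (s + t)) • a + (t / (s + t)) • b,
    ⟨_, _, by positivity, by positivity, by field_simp, rfl⟩, s + t, hst.le, ?_⟩
  rw [lineMap_apply_module']
  match_scalars
  · ring
  · field_simp
  · field_simp

theorem stmt_2_general
    (q p v vi vi1 : Pt)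
    (hv : v ∈ Cone q vi vi1)
    (hq : q ∉ convexHull ℝ ({v, vi, vi1} : Set Pt))
    (hp : p ∉ convexHull ℝ ({v, vi, vi1} : Set Pt))
    (hmeet : (openSegment ℝ q p ∩ convexHull ℝ ({v, vi, vi1} : Set Pt)).Nonempty) :
    (openSegment ℝ q p ∩ segment ℝ vi vi1).Nonempty := by
  obtain ⟨x, hxqp, hxT⟩ := hmeet
  rw [openSegment_eq_image_lineMap] at hxqp ⊢
  obtain ⟨β, ⟨hβ₀, hβ₁⟩, rfl⟩ := hxqp
  obtain ⟨w, hw, κ, hκ, hx⟩ :=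
    exists_mem_segment_eq_lineMap_of_mem_cone (convexHull_subset_cone hv hxT)
  have hκ₀ : 0 < κ := hκ.lt_of_ne <| by
    rintro rfl
    rw [lineMap_apply_zero] at hx
    exact hq (hx ▸ hxT)
  have hwT : w ∈ convexHull ℝ ({v, vi, vi1} : Set Pt) :=
    segment_subset_convexHull (by simp) (by simp) hw
  have hw_eq : w = lineMap q p (β / κ) := eq_lineMap_div_of_lineMap_eq hκ₀.ne' hx
  -- otherwise `p` lies between `x` and `w` on the ray from `q`, hence in the triangle
  have hβκ : β / κ < 1 := by
    by_contra! h
    refine hp ((convex_convexHull ℝ _).segment_subset hxT hwT ?_)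
    simpa [hw_eq] using lineMap_mem_segment_lineMap q p hβ₁.le h
  exact ⟨w, ⟨β / κ, ⟨by positivity, hβκ⟩, hw_eq.symm⟩, hw⟩

theorem stmt_2
    (q p v vi vi1 : Pt)
    (hli : LinearIndependent ℝ ![vi - q, vi1 - q])
    (hv : v ∈ Cone q vi vi1)
    (hq : q ∉ convexHull ℝ ({v, vi, vi1} : Set Pt))
    (hp : p ∉ convexHull ℝ ({v, vi, vi1} : Set Pt))
    (hmeet : (openSegment ℝ q p ∩ convexHull ℝ ({v, vi, vi1} : Set Pt)).Nonempty) :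
    (openSegment ℝ q p ∩ segment ℝ vi vi1).Nonempty :=
  stmt_2_general q p v vi vi1 hv hq hp hmeet
end

section
/- Assume the insertion scenario. Let q ∈ ℝ² be a point with q ∉ T such that vᵢ − q and vᵢ₊₁ − q are linearly independent and v lies in the cone at q spanned by vᵢ and vᵢ₊₁, and let p ∉ T be a point mutually visible to q with respect to E. Then p and q are mutually visible with respect to E'' = E ∪ {[v, vᵢ], [v, vᵢ₊₁]}. (This is the claim of Section 3.1 of the paper for the case in which the rays bounding vc_m are q vᵢ and q vᵢ₊₁: inserting v hides no point of the visibility polygon of q.) -/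
open Set

lemma exists_base_point (v vi vi1 q p : Pt) (s t a u X1 X2 : ℝ)
    (hs : 0 ≤ s) (ht : 0 ≤ t) (hst : s + t ≠ 1)
    (ha : 0 ≤ a) (ha1 : a ≤ 1)
    (hu0 : 0 < u) (hu1 : u < 1)
    (hvq : v - q = s • (vi - q) + t • (vi1 - q))
    (hX1 : a * s ≤ X1) (hX2 : a * t ≤ X2)
    (hsum : X1 + X2 = a * (s + t) + (1 - a))
    (hxu : u • (p - q) = X1 • (vi - q) + X2 • (vi1 - q))
    (hp : p ∉ convexHull ℝ ({v, vi, vi1} : Set Pt)) :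
    ∃ c, c ∈ openSegment ℝ p q ∧ c ∈ segment ℝ vi vi1 := by
  have hX1' : 0 ≤ X1 := le_trans (mul_nonneg ha hs) hX1
  have hX2' : 0 ≤ X2 := le_trans (mul_nonneg ha ht) hX2
  have hσu : u < X1 + X2 := by
    rcases lt_or_gt_of_ne hst with hlt | hgt
    · -- s + t < 1
      by_contra hle
      push_neg at hle  -- X1 + X2 ≤ u
      apply hp
      have hd : 0 < 1 - s - t := by linarith
      have hD : 0 < u * (1 - s - t) := by positivity
      have hDne : u * (1 - s - t) ≠ 0 := ne_of_gt hD
      set A : ℝ := (u - (X1 + X2)) / (u * (1 - s - t)) with hA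
      set B : ℝ := (X1 * (1 - s - t) - (u - (X1 + X2)) * s) / (u * (1 - s - t)) with hB
      set C : ℝ := (X2 * (1 - s - t) - (u - (X1 + X2)) * t) / (u * (1 - s - t)) with hC
      have hA0 : 0 ≤ A := div_nonneg (by linarith) hD.le
      have hB0 : 0 ≤ B := by
        apply div_nonneg _ hD.le
        nlinarith [mul_nonneg (sub_nonneg.2 hX1) hd.le, mul_nonneg hs (by linarith : 0 ≤ 1 - u)]
      have hC0 : 0 ≤ C := by
        apply div_nonneg _ hD.le
        nlinarith [mul_nonneg (sub_nonneg.2 hX2) hd.le, mul_nonneg ht (by linarith : 0 ≤ 1 - u)]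
      have hABC : A + B + C = 1 := by
        rw [hA, hB, hC]
        field_simp
        ring
      have e1 : (u * (1 - s - t)) * A = u - (X1 + X2) := by
        rw [hA]; field_simp
      have e2 : (u * (1 - s - t)) * B = X1 * (1 - s - t) - (u - (X1 + X2)) * s := by
        rw [hB]; field_simp
      have e3 : (u * (1 - s - t)) * C = X2 * (1 - s - t) - (u - (X1 + X2)) * t := by
        rw [hC]; field_simp
      have hpeq : p = A • v + B • vi + C • vi1 := by
        refine smul_right_injective Pt hDne ?_
        show (u * (1 - s - t)) • p = (u * (1 - s - t)) • (A • v + B • vi + C • vi1)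
        rw [smul_add, smul_add, smul_smul, smul_smul, smul_smul, e1, e2, e3]
        linear_combination (norm := module) ((X1 + X2) - u) • hvq + (1 - s - t) • hxu
      rw [hpeq]
      have hmem : ∀ i : Fin 3, ![v, vi, vi1] i ∈ convexHull ℝ ({v, vi, vi1} : Set Pt) := by
        intro i
        fin_cases i <;> apply subset_convexHull <;> simp
      have hsum' := (convex_convexHull ℝ ({v, vi, vi1} : Set Pt)).sum_mem
        (t := Finset.univ) (w := ![A, B, C]) (z := ![v, vi, vi1])
        (by intro i _; fin_cases i <;> simpa using by assumption)
        (by simp [Fin.sum_univ_three]; linarith)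
        (by intro i _; exact hmem i)
      simpa [Fin.sum_univ_three] using hsum'
    · -- s + t > 1
      nlinarith [mul_nonneg ha (by linarith : (0:ℝ) ≤ s + t - 1)]
  have hσ0 : 0 < X1 + X2 := lt_trans hu0 hσu
  have hσne : X1 + X2 ≠ 0 := ne_of_gt hσ0
  have key : u • p + ((X1 + X2) - u) • q = X1 • vi + X2 • vi1 := by
    linear_combination (norm := module) hxu
  refine ⟨(X1 / (X1 + X2)) • vi + (X2 / (X1 + X2)) • vi1, ?_, ?_⟩
  · refine ⟨u / (X1 + X2), 1 - u / (X1 + X2), by positivity,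
      by rw [sub_pos]; exact (div_lt_one hσ0).2 hσu, by ring, ?_⟩
    refine smul_right_injective Pt hσne ?_
    show (X1 + X2) • ((u / (X1 + X2)) • p + (1 - u / (X1 + X2)) • q) = (X1 + X2) • _
    have f1 : (X1 + X2) * (u / (X1 + X2)) = u := by field_simp
    have f2 : (X1 + X2) * (1 - u / (X1 + X2)) = (X1 + X2) - u := by field_simp
    have f3 : (X1 + X2) * (X1 / (X1 + X2)) = X1 := by field_simp
    have f4 : (X1 + X2) * (X2 / (X1 + X2)) = X2 := by field_simp
    rw [smul_add, smul_add, smul_smul, smul_smul, smul_smul, smul_smul, f1, f2, f3, f4]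
    exact key
  · exact ⟨X1 / (X1 + X2), X2 / (X1 + X2), div_nonneg hX1' hσ0.le, div_nonneg hX2' hσ0.le,
      by field_simp, rfl⟩

theorem stmt_3
    (E : Set (Set Pt)) (v vi vi1 : Pt)
    (hind : AffineIndependent ℝ ![v, vi, vi1])
    (hE : IsObstacleSet E)
    (hbase : segment ℝ vi vi1 ∈ E)
    (hT : convexHull ℝ ({v, vi, vi1} : Set Pt) ∩ ⋃₀ E = segment ℝ vi vi1)
    (q p : Pt)
    (hq : q ∉ convexHull ℝ ({v, vi, vi1} : Set Pt))
    (hli : LinearIndependent ℝ ![vi - q, vi1 - q])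
    (hv : v ∈ Cone q vi vi1)
    (hp : p ∉ convexHull ℝ ({v, vi, vi1} : Set Pt))
    (hvis : MutuallyVisible E p q) :
    MutuallyVisible (E ∪ {segment ℝ v vi, segment ℝ v vi1}) p q := by
  obtain ⟨hpq, hvisE⟩ := hvis
  refine ⟨hpq, ?_⟩
  rintro s' hs'
  rcases hs' with hE' | hnew
  · exact hvisE s' hE'
  · obtain ⟨s, t, hs, ht, hveq⟩ := hv
    have hvq : v - q = s • (vi - q) + t • (vi1 - q) := by rw [hveq]; abel
    have hst : s + t ≠ 1 := by
      intro h
      have h2 : ∑ i : Fin 3, (![(-1 : ℝ), s, t]) i • (![v, vi, vi1]) i = 0 := by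
        simp only [Fin.sum_univ_three, Matrix.cons_val_zero, Matrix.cons_val_one,
          Matrix.head_cons, Matrix.cons_val_two, Matrix.tail_cons]
        have hq0 : (1 - s - t) • q = (0 : Pt) := by
          rw [show (1 - s - t : ℝ) = 0 by linarith, zero_smul]
        linear_combination (norm := module) (-1 : ℝ) • hvq - hq0
      have h1 : ∑ i : Fin 3, (![(-1 : ℝ), s, t]) i = 0 := by
        simp [Fin.sum_univ_three]; linarith
      have := affineIndependent_iff.1 hind Finset.univ ![(-1 : ℝ), s, t] h1 h2 0
        (Finset.mem_univ _)
      norm_num at this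
    have hbase_empty := hvisE _ hbase
    rw [Set.eq_empty_iff_forall_notMem]
    rintro x ⟨hx1, hx2⟩
    obtain ⟨uu, uu', huu, huu', huus, hxeq⟩ := hx1
    have huu1 : uu < 1 := by linarith
    have huu'eq : uu' = 1 - uu := by linarith
    subst huu'eq
    have hxu : uu • (p - q) = x - q := by
      linear_combination (norm := module) hxeq
    simp only [Set.mem_insert_iff, Set.mem_singleton_iff] at hnew
    rcases hnew with h | h <;> subst h
    · obtain ⟨a, b, ha, hb, hab, hxe⟩ := hx2
      have hb' : b = 1 - a := by linarith
      subst hb'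
      have ha1 : a ≤ 1 := by linarith
      have hxu2 : uu • (p - q) = (a * s + (1 - a)) • (vi - q) + (a * t) • (vi1 - q) := by
        rw [hxu]
        linear_combination (norm := module) a • hvq - hxe
      obtain ⟨c, hc1, hc2⟩ := exists_base_point v vi vi1 q p s t a uu (a * s + (1 - a)) (a * t)
        hs ht hst ha ha1 huu huu1 hvq (by linarith) le_rfl (by ring) hxu2 hp
      have : c ∈ openSegment ℝ p q ∩ segment ℝ vi vi1 := ⟨hc1, hc2⟩
      rw [hbase_empty] at this
      exact this
    · obtain ⟨a, b, ha, hb, hab, hxe⟩ := hx2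
      have hb' : b = 1 - a := by linarith
      subst hb'
      have ha1 : a ≤ 1 := by linarith
      have hxu2 : uu • (p - q) = (a * s) • (vi - q) + (a * t + (1 - a)) • (vi1 - q) := by
        rw [hxu]
        linear_combination (norm := module) a • hvq - hxe
      obtain ⟨c, hc1, hc2⟩ := exists_base_point v vi vi1 q p s t a uu (a * s) (a * t + (1 - a))
        hs ht hst ha ha1 huu huu1 hvq le_rfl (by linarith) (by ring) hxu2 hp
      have : c ∈ openSegment ℝ p q ∩ segment ℝ vi vi1 := ⟨hc1, hc2⟩
      rw [hbase_empty] at this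
      exact this
end

section
/- Let q, p, v, vᵢ, vᵢ₊₁ ∈ ℝ² be such that vᵢ − q and vᵢ₊₁ − q are linearly independent and v lies in the cone at q spanned by vᵢ and vᵢ₊₁. Let T := convexHull ℝ {v, vᵢ, vᵢ₊₁}, and assume q ∉ T and p ∉ T. If openSegment ℝ q p meets [v, vᵢ] ∪ [v, vᵢ₊₁], then openSegment ℝ q p meets [vᵢ, vᵢ₊₁]. (This is the claim of Section 3.2 of the paper for the case in which the rays bounding vc_m are q vᵢ and q vᵢ₊₁: any line of sight from q blocked by the two sides incident to v remains blocked by the segment vᵢ vᵢ₊₁ after v is deleted, so the deletion of v reveals no new vertex.) -/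
open Set

/-!
Write points as `q + α • (vᵢ - q) + β • (vᵢ₊₁ - q)`. A crossing point `x` of `(q, p)` with the side
`[v, vᵢ]` has coordinate sum `σ`, and `p` has coordinate sum `σ / t` where `x = (1 - t) q + t p`.
If `σ / t > 1`, the ray from `q` through `p` crosses the line `vᵢ vᵢ₊₁` strictly before `p`, inside
`[vᵢ, vᵢ₊₁]`. Otherwise `σ ≤ t < 1` forces `v` to the same side of that line as `q`, and then
explicit barycentric weights put `p` in the triangle `v vᵢ vᵢ₊₁`, which is excluded.
-/

section ConeCoordinates

variable {E : Type*} [AddCommGroup E] [Module ℝ E]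

lemma openSegment_inter_segment_nonempty_of_one_lt_add {q u w p : E} {α β : ℝ}
    (hα : 0 ≤ α) (hβ : 0 ≤ β) (hαβ : 1 < α + β)
    (hp : p = q + α • (u - q) + β • (w - q)) :
    (openSegment ℝ q p ∩ segment ℝ u w).Nonempty := by
  have hσ : 0 < α + β := by linarith
  have hσ_inv : 1 / (α + β) < 1 := (div_lt_one hσ).2 hαβ
  refine ⟨(α / (α + β)) • u + (β / (α + β)) • w,
    ⟨1 - 1 / (α + β), 1 / (α + β), by linarith, by positivity, by ring, ?_⟩,
    ⟨α / (α + β), β / (α + β), by positivity, by positivity, ?_, rfl⟩⟩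
  · rw [hp]
    match_scalars
    · field_simp; ring
    · field_simp
    · field_simp
  · field_simp

lemma mem_convexHull_triple_of_coords {q u w v p : E} {a b α β : ℝ}
    (hv : v = q + a • (u - q) + b • (w - q)) (hab : a + b < 1)
    (hp : p = q + α • (u - q) + β • (w - q)) (hαβ : α + β ≤ 1)
    (hαa : a * (1 - (α + β)) ≤ α * (1 - (a + b)))
    (hβb : b * (1 - (α + β)) ≤ β * (1 - (a + b))) :
    p ∈ convexHull ℝ {v, u, w} := by
  have hd : 0 < 1 - (a + b) := by linarith
  -- barycentric weight of `v`
  obtain ⟨c, hcd⟩ : ∃ c, c * (1 - (a + b)) = 1 - (α + β) := ⟨_, div_mul_cancel₀ _ hd.ne'⟩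
  have hc : 0 ≤ c := (mul_nonneg_iff_of_pos_right hd).1 (by linarith)
  have hca : c * a ≤ α := le_of_mul_le_mul_right (by linear_combination hαa + a * hcd) hd
  have hcb : c * b ≤ β := le_of_mul_le_mul_right (by linear_combination hβb + b * hcd) hd
  refine mem_convexHull_of_exists_fintype ![c, α - c * a, β - c * b] ![v, u, w] ?_ ?_ ?_ ?_
  · intro i
    fin_cases i <;> simp [hc, hca, hcb]
  · simp only [Fin.sum_univ_three, Matrix.cons_val]
    linear_combination hcd
  · intro i
    fin_cases i <;> simp
  · simp only [Fin.sum_univ_three, Matrix.cons_val, hp, hv]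
    match_scalars
    · linear_combination hcd
    · ring
    · ring

lemma openSegment_inter_segment_nonempty_of_meets_side {q p v u w : E} {a b : ℝ}
    (ha : 0 ≤ a) (hb : 0 ≤ b) (hv : v = q + a • (u - q) + b • (w - q))
    (hp : p ∉ convexHull ℝ {v, u, w})
    (hmeet : (openSegment ℝ q p ∩ segment ℝ v u).Nonempty) :
    (openSegment ℝ q p ∩ segment ℝ u w).Nonempty := by
  obtain ⟨x, ⟨s, t, hs, ht, hst, rfl⟩, m, n, hm, hn, hmn, hx⟩ := hmeet
  obtain rfl := eq_sub_of_add_eq hst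
  obtain rfl := eq_sub_of_add_eq' hmn
  obtain ⟨α, htα⟩ : ∃ α, t * α = m * a + (1 - m) := ⟨_, mul_div_cancel₀ _ ht.ne'⟩
  obtain ⟨β, htβ⟩ : ∃ β, t * β = m * b := ⟨_, mul_div_cancel₀ _ ht.ne'⟩
  have hpc : p = q + α • (u - q) + β • (w - q) := by
    refine smul_right_injective E ht.ne' ?_
    have htp : t • p = m • v + (1 - m) • u - (1 - t) • q := by rw [hx]; abel
    simp only [smul_add, smul_smul, htα, htβ, htp, hv]
    module
  rcases lt_or_ge 1 (α + β) with hαβ | hαβ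
  · exact openSegment_inter_segment_nonempty_of_one_lt_add (by nlinarith) (by nlinarith) hαβ hpc
  · refine absurd ?_ hp
    have hab : a + b < 1 := by nlinarith
    refine mem_convexHull_triple_of_coords hv hab hpc hαβ ?_ ?_
    · nlinarith [mul_nonneg ha hs.le, mul_nonneg hn (sub_nonneg.2 hab.le)]
    · nlinarith [mul_nonneg hb hs.le]

end ConeCoordinates

theorem stmt_4_general
    (q p v vi vi1 : Pt)
    (hv : v ∈ Cone q vi vi1)
    (hp : p ∉ convexHull ℝ ({v, vi, vi1} : Set Pt))
    (hmeet : (openSegment ℝ q p ∩ (segment ℝ v vi ∪ segment ℝ v vi1)).Nonempty) :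
    (openSegment ℝ q p ∩ segment ℝ vi vi1).Nonempty := by
  obtain ⟨a, b, ha, hb, hveq⟩ := hv
  obtain ⟨x, hxq, hxi | hxi1⟩ := hmeet
  · exact openSegment_inter_segment_nonempty_of_meets_side ha hb hveq hp ⟨x, hxq, hxi⟩
  · have hveq' : v = q + b • (vi1 - q) + a • (vi - q) := by rw [hveq]; abel
    rw [segment_symm]
    refine openSegment_inter_segment_nonempty_of_meets_side hb ha hveq' ?_ ⟨x, hxq, hxi1⟩
    rwa [pair_comm]

theorem stmt_4
    (q p v vi vi1 : Pt)
    (hli : LinearIndependent ℝ ![vi - q, vi1 - q])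
    (hv : v ∈ Cone q vi vi1)
    (hq : q ∉ convexHull ℝ ({v, vi, vi1} : Set Pt))
    (hp : p ∉ convexHull ℝ ({v, vi, vi1} : Set Pt))
    (hmeet : (openSegment ℝ q p ∩ (segment ℝ v vi ∪ segment ℝ v vi1)).Nonempty) :
    (openSegment ℝ q p ∩ segment ℝ vi vi1).Nonempty :=
  stmt_4_general q p v vi vi1 hv hp hmeet
end

section
/- Let T ⊆ ℝ² be a convex set and let q ∈ ℝ² with q ∉ T. Let a, c ∈ ℝ² be such that a − q and c − q are linearly independent, openSegment ℝ q a meets T, and openSegment ℝ q c meets T. Then for all real numbers s > 0 and t > 0, setting b := q + s • (a − q) + t • (c − q), the open ray {q + λ • (b − q) | λ > 0} meets T. (This is the geometric content of Observation 3.1 of the paper: the directions from q in which a convex blocker T obstructs the view form an angularly contiguous set, so the vertices of the visibility polygon of q hidden by inserting a vertex are contiguous along its boundary.) -/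
open Set

/-- The weights `β s` and `α t` (normalised) put the convex combination of `q + α • u` and
`q + β • v` on the ray from `q` in direction `s • u + t • v`. -/
theorem Convex.exists_pos_smul_add_smul_mem {𝕜 E : Type*} [Field 𝕜] [LinearOrder 𝕜]
    [IsStrictOrderedRing 𝕜] [AddCommGroup E] [Module 𝕜 E] {T : Set E} (hT : Convex 𝕜 T)
    {q u v : E} {α β s t : 𝕜} (hα : 0 < α) (hβ : 0 < β) (hs : 0 < s) (ht : 0 < t)
    (hu : q + α • u ∈ T) (hv : q + β • v ∈ T) :
    ∃ l : 𝕜, 0 < l ∧ q + l • (s • u + t • v) ∈ T := by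
  have hD : 0 < β * s + α * t := by positivity
  refine ⟨α * β / (β * s + α * t), by positivity, ?_⟩
  convert hT hu hv (div_pos (mul_pos hβ hs) hD).le (div_pos (mul_pos hα ht) hD).le
    (by field_simp) using 1
  match_scalars <;> field_simp

theorem stmt_5_general
    (T : Set Pt) (hT : Convex ℝ T) (q : Pt)
    (a c : Pt)
    (ha : (openSegment ℝ q a ∩ T).Nonempty)
    (hc : (openSegment ℝ q c ∩ T).Nonempty)
    (s t : ℝ) (hs : 0 < s) (ht : 0 < t)
    (b : Pt) (hb : b = q + s • (a - q) + t • (c - q)) :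
    ({x : Pt | ∃ l : ℝ, 0 < l ∧ x = q + l • (b - q)} ∩ T).Nonempty := by
  obtain ⟨_, ⟨α, ⟨hα, -⟩, rfl⟩, hαT⟩ := (openSegment_eq_image' ℝ q a ▸ ha)
  obtain ⟨_, ⟨β, ⟨hβ, -⟩, rfl⟩, hβT⟩ := (openSegment_eq_image' ℝ q c ▸ hc)
  obtain ⟨l, hl, hlT⟩ := hT.exists_pos_smul_add_smul_mem hα hβ hs ht hαT hβT
  exact ⟨_, ⟨l, hl, by rw [hb, add_assoc, add_sub_cancel_left]⟩, hlT⟩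

theorem stmt_5
    (T : Set Pt) (hT : Convex ℝ T) (q : Pt) (hq : q ∉ T)
    (a c : Pt) (hli : LinearIndependent ℝ ![a - q, c - q])
    (ha : (openSegment ℝ q a ∩ T).Nonempty)
    (hc : (openSegment ℝ q c ∩ T).Nonempty)
    (s t : ℝ) (hs : 0 < s) (ht : 0 < t)
    (b : Pt) (hb : b = q + s • (a - q) + t • (c - q)) :
    ({x : Pt | ∃ l : ℝ, 0 < l ∧ x = q + l • (b - q)} ∩ T).Nonempty :=
  stmt_5_general T hT q a c ha hc s t hs ht b hb
end

section
/- Assume the insertion scenario. Let t, u ∈ V(E) be mutually visible with respect to E. Then t and u are mutually visible with respect to E'' = E ∪ {[v, vᵢ], [v, vᵢ₊₁]} if and only if openSegment ℝ t u is disjoint from T. (This is the claim of Section 5.1 of the paper: a visibility-graph edge of the current polygonal domain survives the insertion of the vertex v if and only if it does not intersect the triangle v vᵢ vᵢ₊₁.) -/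
open Set

/-! The boundary of the triangle misses the open segment (the base by visibility in `E`, the sides
by visibility in `E''`), so the connected open segment, once it meets the triangle, lies inside it.
Its endpoints are then points of `⋃₀ E` in the triangle, i.e. points of the base, and the open
segment lies in the base, contradicting visibility in `E`. -/

theorem IsPreconnected.subset_interior_of_disjoint_frontier {α : Type*} [TopologicalSpace α]
    {s t : Set α} (hs : IsPreconnected s) (hst : (s ∩ t).Nonempty)
    (hfr : Disjoint s (frontier t)) : s ⊆ interior t := by
  have hcover : s ⊆ interior t ∪ (closure t)ᶜ := fun x hx => by
    by_cases hxc : x ∈ closure t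
    · exact .inl (by_contra fun hxi => hfr.notMem_of_mem_left hx ⟨hxc, hxi⟩)
    · exact .inr hxc
  obtain ⟨x, hxs, hxt⟩ := hst
  refine hs.subset_left_of_subset_union isOpen_interior isClosed_closure.isOpen_compl
    (disjoint_compl_right.mono interior_subset_closure le_rfl) hcover ⟨x, hxs, ?_⟩
  exact (hcover hxs).resolve_right (not_not.mpr (subset_closure hxt))

theorem segment_subset_of_disjoint_frontier {V : Type*} [NormedAddCommGroup V]
    [NormedSpace ℝ V] {T : Set V} (hT : IsClosed T) {x y : V}
    (hmeet : (openSegment ℝ x y ∩ T).Nonempty)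
    (hfr : Disjoint (openSegment ℝ x y) (frontier T)) : segment ℝ x y ⊆ T := by
  rw [← closure_openSegment]
  exact closure_minimal ((convex_openSegment x y).isPreconnected
    |>.subset_interior_of_disjoint_frontier hmeet hfr |>.trans interior_subset) hT

theorem frontier_convexHull_triangle_subset {V : Type*} [NormedAddCommGroup V]
    [NormedSpace ℝ V] [FiniteDimensional ℝ V] (hV : Module.finrank ℝ V = 2) {a b c : V}
    (hind : AffineIndependent ℝ ![a, b, c]) :
    frontier (convexHull ℝ {a, b, c}) ⊆ segment ℝ a b ∪ segment ℝ b c ∪ segment ℝ a c := by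
  have htop : affineSpan ℝ (range ![a, b, c]) = ⊤ := by
    rw [hind.affineSpan_eq_top_iff_card_eq_finrank_add_one, hV]
    rfl
  let B : AffineBasis (Fin 3) ℝ V := ⟨![a, b, c], hind, htop⟩
  have hrange : range B = {a, b, c} := by
    change range ![a, b, c] = _
    simp only [Matrix.range_cons, Matrix.range_empty, union_empty, singleton_union]
  have hclosed : IsClosed (convexHull ℝ ({a, b, c} : Set V)) :=
    (toFinite _).isCompact_convexHull (𝕜 := ℝ) |>.isClosed
  rintro x ⟨hxT, hxi⟩
  rw [hclosed.closure_eq, ← hrange, B.convexHull_eq_nonneg_coord] at hxT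
  rw [← hrange, B.interior_convexHull] at hxi
  obtain ⟨p, q, r, hp, hq, hr, hone, rfl, hzero⟩ : ∃ p q r : ℝ, 0 ≤ p ∧ 0 ≤ q ∧ 0 ≤ r ∧
      p + q + r = 1 ∧ p • a + q • b + r • c = x ∧ (p = 0 ∨ q = 0 ∨ r = 0) := by
    refine ⟨_, _, _, hxT 0, hxT 1, hxT 2, ?_, ?_, ?_⟩
    · have h := B.sum_coord_apply_eq_one x
      rwa [Fin.sum_univ_three] at h
    · have h := B.linear_combination_coord_eq_self x
      rwa [Fin.sum_univ_three] at h
    · by_contra! h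
      refine hxi fun i => ?_
      fin_cases i
      exacts [(hxT 0).lt_of_ne' h.1, (hxT 1).lt_of_ne' h.2.1, (hxT 2).lt_of_ne' h.2.2]
  rcases hzero with rfl | rfl | rfl
  · exact .inl (.inr ⟨q, r, hq, hr, by linarith, by module⟩)
  · exact .inr ⟨p, r, hp, hr, by linarith, by module⟩
  · exact .inl (.inl ⟨p, q, hp, hq, by linarith, by module⟩)

theorem mem_sUnion_of_mem_Vset {E : Set (Set Pt)} {x : Pt} (hx : x ∈ Vset E) : x ∈ ⋃₀ E := by
  obtain ⟨s, hsE, a, b, -, rfl, rfl | rfl⟩ := hx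
  exacts [⟨_, hsE, left_mem_segment ℝ _ _⟩, ⟨_, hsE, right_mem_segment ℝ _ _⟩]

theorem stmt_7_general
    (E : Set (Set Pt)) (v vi vi1 : Pt)
    (hind : AffineIndependent ℝ ![v, vi, vi1])
    (hbase : segment ℝ vi vi1 ∈ E)
    (hT : convexHull ℝ ({v, vi, vi1} : Set Pt) ∩ ⋃₀ E = segment ℝ vi vi1)
    (t u : Pt) (ht : t ∈ Vset E) (hu : u ∈ Vset E)
    (htu : MutuallyVisible E t u) :
    MutuallyVisible (E ∪ {segment ℝ v vi, segment ℝ v vi1}) t u ↔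
      openSegment ℝ t u ∩ convexHull ℝ ({v, vi, vi1} : Set Pt) = ∅ := by
  set T := convexHull ℝ ({v, vi, vi1} : Set Pt)
  have hdisj_base := disjoint_iff_inter_eq_empty.mpr (htu.2 _ hbase)
  constructor
  · rintro ⟨-, hvis⟩
    refine eq_empty_of_forall_notMem fun x hx => ?_
    have hdisj_frontier : Disjoint (openSegment ℝ t u) (frontier T) := by
      refine Disjoint.mono_right (frontier_convexHull_triangle_subset finrank_euclideanSpace_fin
        hind) (disjoint_union_right.mpr ⟨disjoint_union_right.mpr ⟨?_, hdisj_base⟩, ?_⟩)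
      exacts [disjoint_iff_inter_eq_empty.mpr (hvis _ (.inr (.inl rfl))),
        disjoint_iff_inter_eq_empty.mpr (hvis _ (.inr (.inr rfl)))]
    have hseg_sub : segment ℝ t u ⊆ T := segment_subset_of_disjoint_frontier
      ((toFinite _).isCompact_convexHull (𝕜 := ℝ)).isClosed ⟨x, hx⟩ hdisj_frontier
    have hbase_mem : ∀ p ∈ Vset E, p ∈ segment ℝ t u → p ∈ segment ℝ vi vi1 :=
      fun p hp hpseg => hT ▸ ⟨hseg_sub hpseg, mem_sUnion_of_mem_Vset hp⟩
    exact hdisj_base.notMem_of_mem_left hx.1 <| (convex_segment vi vi1).openSegment_subset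
      (hbase_mem t ht (left_mem_segment ℝ t u)) (hbase_mem u hu (right_mem_segment ℝ t u)) hx.1
  · intro h
    have hside_sub : ∀ w ∈ ({vi, vi1} : Set Pt), segment ℝ v w ⊆ T := fun w hw =>
      (convex_convexHull ℝ _).segment_subset (subset_convexHull ℝ _ (mem_insert v _))
        (subset_convexHull ℝ _ (subset_insert _ _ hw))
    have hside : ∀ w ∈ ({vi, vi1} : Set Pt), openSegment ℝ t u ∩ segment ℝ v w = ∅ :=
      fun w hw => subset_empty_iff.mp (h ▸ inter_subset_inter_right _ (hside_sub w hw))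
    refine ⟨htu.1, fun s hs => ?_⟩
    rcases hs with hs | rfl | rfl
    exacts [htu.2 s hs, hside vi (by simp), hside vi1 (by simp)]

theorem stmt_7
    (E : Set (Set Pt)) (v vi vi1 : Pt)
    (hind : AffineIndependent ℝ ![v, vi, vi1])
    (hE : IsObstacleSet E)
    (hbase : segment ℝ vi vi1 ∈ E)
    (hT : convexHull ℝ ({v, vi, vi1} : Set Pt) ∩ ⋃₀ E = segment ℝ vi vi1)
    (t u : Pt) (ht : t ∈ Vset E) (hu : u ∈ Vset E)
    (htu : MutuallyVisible E t u) :
    MutuallyVisible (E ∪ {segment ℝ v vi, segment ℝ v vi1}) t u ↔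
      openSegment ℝ t u ∩ convexHull ℝ ({v, vi, vi1} : Set Pt) = ∅ :=
  stmt_7_general E v vi vi1 hind hbase hT t u ht hu htu
end

section
/- Assume the insertion scenario. Let q, p ∈ ℝ² with q ≠ p, q ∉ T, p ∉ T, and suppose p and q are mutually visible with respect to E. Then p and q are mutually visible with respect to E'' = E ∪ {[v, vᵢ], [v, vᵢ₊₁]} if and only if openSegment ℝ q p is disjoint from T. (This is the correctness claim of Section 3.1 of the paper for the update of the visibility polygon: a point visible from q becomes invisible upon inserting the vertex v exactly when its open segment to q intersects the triangle v vᵢ vᵢ₊₁.) -/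
open Set

theorem stmt_9
    (E : Set (Set Pt)) (v vi vi1 : Pt)
    (hind : AffineIndependent ℝ ![v, vi, vi1])
    (hE : IsObstacleSet E)
    (hbase : segment ℝ vi vi1 ∈ E)
    (hT : convexHull ℝ ({v, vi, vi1} : Set Pt) ∩ ⋃₀ E = segment ℝ vi vi1)
    (q p : Pt) (hqp : q ≠ p)
    (hq : q ∉ convexHull ℝ ({v, vi, vi1} : Set Pt))
    (hp : p ∉ convexHull ℝ ({v, vi, vi1} : Set Pt))
    (hvis : MutuallyVisible E p q) :
    MutuallyVisible (E ∪ {segment ℝ v vi, segment ℝ v vi1}) p q ↔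
      openSegment ℝ q p ∩ convexHull ℝ ({v, vi, vi1} : Set Pt) = ∅ := by
  obtain ⟨hpq, hvisE⟩ := hvis
  have hspan : affineSpan ℝ (Set.range ![v, vi, vi1]) = ⊤ := by
    rw [hind.affineSpan_eq_top_iff_card_eq_finrank_add_one]
    simp [finrank_euclideanSpace]
  set b : AffineBasis (Fin 3) ℝ Pt := ⟨![v, vi, vi1], hind, hspan⟩ with hbdef
  have hb0 : b 0 = v := rfl
  have hb1 : b 1 = vi := rfl
  have hb2 : b 2 = vi1 := rfl
  have hrange : Set.range (b : Fin 3 → Pt) = ({v, vi, vi1} : Set Pt) := by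
    ext x
    constructor
    · rintro ⟨i, rfl⟩
      fin_cases i
      exacts [Or.inl rfl, Or.inr (Or.inl rfl), Or.inr (Or.inr rfl)]
    · rintro (rfl | rfl | rfl)
      exacts [⟨0, rfl⟩, ⟨1, rfl⟩, ⟨2, rfl⟩]
  have hTcoord : convexHull ℝ ({v, vi, vi1} : Set Pt)
      = {x | ∀ i, 0 ≤ b.coord i x} := by
    rw [← hrange, b.convexHull_eq_nonneg_coord]
  have hsymm : openSegment ℝ p q = openSegment ℝ q p := openSegment_symm ℝ p q
  constructor
  · rintro ⟨-, hvis''⟩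
    by_contra hne
    obtain ⟨x, hxseg, hxT⟩ := Set.nonempty_iff_ne_empty.2 hne
    obtain ⟨i0, hi0⟩ : ∃ i, b.coord i q < 0 := by
      by_contra h; push_neg at h
      exact hq (hTcoord ▸ h)
    set γ : ℝ → Pt := fun t => q + t • (x - q) with hγ
    have hγcont : Continuous γ := continuous_const.add (continuous_id.smul continuous_const)
    set f : ℝ → ℝ :=
      fun t => min (min (b.coord 0 (γ t)) (b.coord 1 (γ t))) (b.coord 2 (γ t)) with hf
    have hfcont : Continuous f :=
      (((continuous_barycentric_coord b 0).comp hγcont).min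
        ((continuous_barycentric_coord b 1).comp hγcont)).min
        ((continuous_barycentric_coord b 2).comp hγcont)
    have hγ0 : γ 0 = q := by simp [hγ]
    have hγ1 : γ 1 = x := by simp [hγ]
    have hf0 : f 0 < 0 := by
      have h1 : f 0 ≤ b.coord i0 (γ 0) := by
        fin_cases i0
        · exact le_trans (min_le_left _ _) (min_le_left _ _)
        · exact le_trans (min_le_left _ _) (min_le_right _ _)
        · exact min_le_right _ _
      rw [hγ0] at h1
      exact lt_of_le_of_lt h1 hi0
    have hxcoord : ∀ i, 0 ≤ b.coord i x := by
      rw [hTcoord] at hxT; exact hxT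
    have hf1 : 0 ≤ f 1 := by
      rw [hf]; simp only [hγ1]
      exact le_min (le_min (hxcoord 0) (hxcoord 1)) (hxcoord 2)
    obtain ⟨t, htmem, hft⟩ := intermediate_value_Icc (by norm_num : (0:ℝ) ≤ 1)
      hfcont.continuousOn ⟨hf0.le, hf1⟩
    set y : Pt := γ t with hy
    have hft' : min (min (b.coord 0 y) (b.coord 1 y)) (b.coord 2 y) = 0 := hft
    have hc0 : min (min (b.coord 0 y) (b.coord 1 y)) (b.coord 2 y) ≤ b.coord 0 y :=
      le_trans (min_le_left _ _) (min_le_left _ _)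
    have hc1 : min (min (b.coord 0 y) (b.coord 1 y)) (b.coord 2 y) ≤ b.coord 1 y :=
      le_trans (min_le_left _ _) (min_le_right _ _)
    have hc2 : min (min (b.coord 0 y) (b.coord 1 y)) (b.coord 2 y) ≤ b.coord 2 y :=
      min_le_right _ _
    have hycoord : ∀ i, 0 ≤ b.coord i y := by
      intro i
      fin_cases i
      exacts [hft' ▸ hc0, hft' ▸ hc1, hft' ▸ hc2]
    have hyT : y ∈ convexHull ℝ ({v, vi, vi1} : Set Pt) := by
      rw [hTcoord]; exact hycoord
    have hzero : b.coord 0 y = 0 ∨ b.coord 1 y = 0 ∨ b.coord 2 y = 0 := by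
      by_contra h
      push_neg at h
      obtain ⟨h0, h1, h2⟩ := h
      have p0 : 0 < b.coord 0 y := lt_of_le_of_ne (hycoord 0) (Ne.symm h0)
      have p1 : 0 < b.coord 1 y := lt_of_le_of_ne (hycoord 1) (Ne.symm h1)
      have p2 : 0 < b.coord 2 y := lt_of_le_of_ne (hycoord 2) (Ne.symm h2)
      have : 0 < min (min (b.coord 0 y) (b.coord 1 y)) (b.coord 2 y) :=
        lt_min (lt_min p0 p1) p2
      rw [hft'] at this
      exact lt_irrefl 0 this
    have hyqx : y ∈ segment ℝ q x := by
      rw [segment_eq_image']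
      exact ⟨t, htmem, rfl⟩
    have hyseg : y ∈ segment ℝ q p :=
      (convex_segment q p).segment_subset (left_mem_segment ℝ q p)
        (openSegment_subset_segment ℝ q p hxseg) hyqx
    have hyq : y ≠ q := fun h => hq (h ▸ hyT)
    have hyp : y ≠ p := fun h => hp (h ▸ hyT)
    have hyopen : y ∈ openSegment ℝ q p :=
      mem_openSegment_of_ne_left_right hyq.symm hyp.symm hyseg
    have hsum : b.coord 0 y + b.coord 1 y + b.coord 2 y = 1 := by
      have h := b.sum_coord_apply_eq_one y
      rwa [Fin.sum_univ_three] at h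
    have hcomb : b.coord 0 y • v + b.coord 1 y • vi + b.coord 2 y • vi1 = y := by
      have h := b.linear_combination_coord_eq_self y
      rwa [Fin.sum_univ_three, hb0, hb1, hb2] at h
    rcases hzero with h0 | h1 | h2
    · have hmem : y ∈ segment ℝ vi vi1 := by
        rw [h0, zero_smul, zero_add] at hcomb
        exact ⟨b.coord 1 y, b.coord 2 y, hycoord 1, hycoord 2, by linarith, hcomb⟩
      have hcontra := hvisE _ hbase
      rw [hsymm] at hcontra
      exact absurd (Set.mem_inter hyopen hmem) (by rw [hcontra]; exact Set.notMem_empty y)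
    · have hmem : y ∈ segment ℝ v vi1 := by
        rw [h1, zero_smul, add_zero] at hcomb
        exact ⟨b.coord 0 y, b.coord 2 y, hycoord 0, hycoord 2, by linarith, hcomb⟩
      have hcontra := hvis'' (segment ℝ v vi1) (Or.inr (by simp))
      rw [hsymm] at hcontra
      exact absurd (Set.mem_inter hyopen hmem) (by rw [hcontra]; exact Set.notMem_empty y)
    · have hmem : y ∈ segment ℝ v vi := by
        rw [h2, zero_smul, add_zero] at hcomb
        exact ⟨b.coord 0 y, b.coord 1 y, hycoord 0, hycoord 1, by linarith, hcomb⟩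
      have hcontra := hvis'' (segment ℝ v vi) (Or.inr (by simp))
      rw [hsymm] at hcontra
      exact absurd (Set.mem_inter hyopen hmem) (by rw [hcontra]; exact Set.notMem_empty y)
  · intro hdisj
    refine ⟨hpq, ?_⟩
    rintro s (hs | hs)
    · exact hvisE s hs
    · simp only [Set.mem_insert_iff, Set.mem_singleton_iff] at hs
      have hsub : s ⊆ convexHull ℝ ({v, vi, vi1} : Set Pt) := by
        rcases hs with rfl | rfl
        · exact segment_subset_convexHull (by simp) (by simp)
        · exact segment_subset_convexHull (by simp) (by simp)
      rw [hsymm]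
      apply Set.eq_empty_of_subset_empty
      intro z hz
      rw [← hdisj]
      exact ⟨hz.1, hsub hz.2⟩
end

section
/- Assume the deletion scenario. Let q, p ∈ ℝ² with q ≠ p, q ∉ T, p ∉ T, and suppose p and q are mutually visible with respect to E (the obstacle set after the deletion of v). Then p and q are mutually visible with respect to E₁ = (E \ {[vᵢ, vᵢ₊₁]}) ∪ {[v, vᵢ], [v, vᵢ₊₁]} (the obstacle set before the deletion) if and only if openSegment ℝ q p is disjoint from T. (This is the correctness claim of Section 3.2 of the paper for the update of the visibility polygon: a point becomes newly visible from q upon deleting the vertex v exactly when it is visible afterwards and its open segment to q intersects the triangle v vᵢ vᵢ₊₁.) -/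
open Set

/-!
Before the deletion the sides `[v, vᵢ]`, `[v, vᵢ₊₁]` lie in `T`, so an open segment avoiding
`T` avoids them. Conversely, if the open segment `(q, p)` avoids all three edges of `T`, it
avoids the frontier of `T`; being connected, it then lies either in the interior of `T` or
outside `T`, and the first is impossible because its closure contains `p ∉ T`.
-/

theorem IsPreconnected.subset_compl_of_disjoint_frontier {X : Type*} [TopologicalSpace X]
    {s T : Set X} {p : X} (hs : IsPreconnected s) (hT : IsClosed T)
    (hsT : Disjoint s (frontier T)) (hps : p ∈ closure s) (hpT : p ∉ T) : s ⊆ Tᶜ := by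
  have hcover : s ⊆ interior T ∪ Tᶜ := fun y hys => by
    by_cases hyT : y ∈ T
    · exact .inl (by_contra fun h => hsT.notMem_of_mem_left hys (hT.frontier_eq ▸ ⟨hyT, h⟩))
    · exact .inr hyT
  refine (hs.subset_or_subset isOpen_interior hT.isOpen_compl
    (disjoint_compl_right.mono_left interior_subset) hcover).resolve_left fun hint => hpT ?_
  exact closure_minimal (hint.trans interior_subset) hT hps

theorem openSegment_inter_eq_empty_of_disjoint_frontier {V : Type*} [NormedAddCommGroup V]
    [NormedSpace ℝ V] {T : Set V} {q p : V} (hT : IsClosed T)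
    (hfr : Disjoint (openSegment ℝ q p) (frontier T)) (hp : p ∉ T) :
    openSegment ℝ q p ∩ T = ∅ := by
  have hsub := (convex_openSegment q p).isPreconnected.subset_compl_of_disjoint_frontier hT
    hfr (segment_subset_closure_openSegment (right_mem_segment ℝ q p)) hp
  exact disjoint_iff_inter_eq_empty.mp (subset_compl_iff_disjoint_right.mp hsub)

theorem frontier_convexHull_triple_subset {V : Type*} [NormedAddCommGroup V] [NormedSpace ℝ V]
    [FiniteDimensional ℝ V] (hV : Module.finrank ℝ V = 2) {a b c : V}
    (hind : AffineIndependent ℝ ![a, b, c]) :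
    frontier (convexHull ℝ {a, b, c}) ⊆ segment ℝ a b ∪ segment ℝ a c ∪ segment ℝ b c := by
  let B : AffineBasis (Fin 3) ℝ V := ⟨![a, b, c], hind, by
    rw [hind.affineSpan_eq_top_iff_card_eq_finrank_add_one, hV]; rfl⟩
  have hrange : range B = {a, b, c} := by
    change range ![a, b, c] = _
    rw [Matrix.range_cons, Matrix.range_cons, Matrix.range_cons, Matrix.range_empty]
    simp only [union_empty, singleton_union]
  rw [← hrange, ((finite_range B).isClosed_convexHull (𝕜 := ℝ)).frontier_eq,
    B.interior_convexHull, B.convexHull_eq_nonneg_coord]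
  rintro x ⟨hnn : ∀ i, 0 ≤ B.coord i x, hpos⟩
  obtain ⟨i, hi⟩ : ∃ i, B.coord i x ≤ 0 := by simpa using hpos
  have hsum := B.sum_coord_apply_eq_one x
  have hx := B.linear_combination_coord_eq_self x
  simp only [Fin.sum_univ_three] at hsum hx
  have hi0 : B.coord i x = 0 := le_antisymm hi (hnn i)
  have hB : B 0 = a ∧ B 1 = b ∧ B 2 = c := ⟨rfl, rfl, rfl⟩
  rw [hB.1, hB.2.1, hB.2.2] at hx
  fin_cases i <;> simp only [Fin.zero_eta, Fin.mk_one, Fin.reduceFinMk] at hi0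
  · exact .inr ⟨_, _, hnn 1, hnn 2, by linarith, by simpa [hi0] using hx⟩
  · exact .inl (.inr ⟨_, _, hnn 0, hnn 2, by linarith, by simpa [hi0] using hx⟩)
  · exact .inl (.inl ⟨_, _, hnn 0, hnn 1, by linarith, by simpa [hi0] using hx⟩)

theorem stmt_10_general
    (E : Set (Set Pt)) (v vi vi1 : Pt)
    (hind : AffineIndependent ℝ ![v, vi, vi1])
    (hbase : segment ℝ vi vi1 ∈ E)
    (q p : Pt)
    (hp : p ∉ convexHull ℝ ({v, vi, vi1} : Set Pt))
    (hvis : MutuallyVisible E p q) :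
    MutuallyVisible ((E \ {segment ℝ vi vi1}) ∪ {segment ℝ v vi, segment ℝ v vi1}) p q ↔
      openSegment ℝ q p ∩ convexHull ℝ ({v, vi, vi1} : Set Pt) = ∅ := by
  obtain ⟨hpq, hvisE⟩ := hvis
  rw [openSegment_symm] at hvisE
  constructor
  · rintro ⟨-, hvis₁⟩
    rw [openSegment_symm] at hvis₁
    refine openSegment_inter_eq_empty_of_disjoint_frontier
      ((toFinite _).isClosed_convexHull (𝕜 := ℝ)) ?_ hp
    refine disjoint_iff_inter_eq_empty.mpr (subset_empty_iff.mp fun y ⟨hyqp, hyfr⟩ => ?_)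
    rcases frontier_convexHull_triple_subset finrank_euclideanSpace_fin hind hyfr
      with (h | h) | h
    · exact (hvis₁ _ (.inr (by simp))).subset ⟨hyqp, h⟩
    · exact (hvis₁ _ (.inr (by simp))).subset ⟨hyqp, h⟩
    · exact (hvisE _ hbase).subset ⟨hyqp, h⟩
  · refine fun hdis => ⟨hpq, ?_⟩
    rw [openSegment_symm]
    rintro s (⟨hsE, -⟩ | hs)
    · exact hvisE s hsE
    · have hsT : s ⊆ convexHull ℝ {v, vi, vi1} := by
        rcases hs with rfl | rfl <;> exact segment_subset_convexHull (by simp) (by simp)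
      exact subset_empty_iff.mp (hdis ▸ inter_subset_inter_right _ hsT)

theorem stmt_10
    (E : Set (Set Pt)) (v vi vi1 : Pt)
    (hind : AffineIndependent ℝ ![v, vi, vi1])
    (hE : IsObstacleSet E)
    (hbase : segment ℝ vi vi1 ∈ E)
    (hT : convexHull ℝ ({v, vi, vi1} : Set Pt) ∩ ⋃₀ E = segment ℝ vi vi1)
    (q p : Pt) (hqp : q ≠ p)
    (hq : q ∉ convexHull ℝ ({v, vi, vi1} : Set Pt))
    (hp : p ∉ convexHull ℝ ({v, vi, vi1} : Set Pt))
    (hvis : MutuallyVisible E p q) :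
    MutuallyVisible ((E \ {segment ℝ vi vi1}) ∪ {segment ℝ v vi, segment ℝ v vi1}) p q ↔
      openSegment ℝ q p ∩ convexHull ℝ ({v, vi, vi1} : Set Pt) = ∅ :=
  stmt_10_general E v vi vi1 hind hbase q p hp hvis
end
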